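/- Assume k₁ < 2αB and set z₁ = ((1-γ)/(4αγ))^{1/(1+γ)} and z₂ = -k₁/(2α). Define f^c : [-B,∞) → ℝ by f^c(x) = -αx² for -B ≤ x < z₂, f^c(x) = k₁(x - z₂) - αz₂² for z₂ ≤ x ≤ z₁, and f^c(x) = x^{1-γ}/(1-γ) for x > z₁. Then f^c is concave on [-B,∞), f^c(x) ≥ f(x) for all x ∈ [-B,∞), f^c(x) = f(x) for all x ∈ [-B,z₂] ∪ [z₁,∞), and for every concave function h : [-B,∞) → ℝ with h ≥ f on [-B,∞) one has h ≥ f^c on [-B,∞); i.e. f^c is the concave envelope of f on [-B,∞). -/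

import Mathlib

open Real

/-- The non-concave objective `f(x) = -αx²` for `x < 0`, `x^{1-γ}/(1-γ)` for `x > 0`,
and `f(0) = 0`. -/
noncomputable def f (γ α x : ℝ) : ℝ :=
  if x < 0 then -α * x ^ 2 else x ^ (1 - γ) / (1 - γ)

/-- The threshold `k₁ = (4αγ/(1-γ))^{γ/(1+γ)}`. -/
noncomputable def k₁ (γ α : ℝ) : ℝ := (4 * α * γ / (1 - γ)) ^ (γ / (1 + γ))

/-- The tangency point on the power-utility branch: `z₁ = ((1-γ)/(4αγ))^{1/(1+γ)}`. -/
noncomputable def z₁ (γ α : ℝ) : ℝ := ((1 - γ) / (4 * α * γ)) ^ (1 / (1 + γ))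

/-- The concave envelope of `f` on `[-B, ∞)` in the case `k₁ < 2αB`,
with `z₂ = -k₁/(2α)`:  `f^c(x) = -αx²` for `x < z₂`,
`f^c(x) = k₁(x - z₂) - αz₂²` on `[z₂, z₁]`, and `f^c(x) = x^{1-γ}/(1-γ)` for `x > z₁`. -/
noncomputable def fc1 (γ α x : ℝ) : ℝ :=
  if x < -(k₁ γ α) / (2 * α) then -α * x ^ 2
  else if x ≤ z₁ γ α then
    k₁ γ α * (x + k₁ γ α / (2 * α)) - α * (k₁ γ α / (2 * α)) ^ 2
  else x ^ (1 - γ) / (1 - γ)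


noncomputable def z₂ (γ α : ℝ) : ℝ := -(k₁ γ α) / (2 * α)
noncomputable def gf (α x : ℝ) : ℝ := -α * x ^ 2
noncomputable def Lf (γ α x : ℝ) : ℝ :=
  k₁ γ α * (x + k₁ γ α / (2 * α)) - α * (k₁ γ α / (2 * α)) ^ 2
noncomputable def pf (γ x : ℝ) : ℝ := x ^ (1 - γ) / (1 - γ)
noncomputable def phi (γ α x : ℝ) : ℝ :=
  if x < z₂ γ α then -(2 * α * x) else if x ≤ z₁ γ α then k₁ γ α else x ^ (-γ)

lemma fc1_eq (γ α x : ℝ) :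
    fc1 γ α x = if x < z₂ γ α then gf α x else if x ≤ z₁ γ α then Lf γ α x else pf γ x := rfl
lemma f_eq (γ α x : ℝ) : f γ α x = if x < 0 then gf α x else pf γ x := rfl

set_option linter.unusedSectionVars false

section
variable {γ α : ℝ} (hγ0 : 0 < γ) (hγ1 : γ < 1) (hα : 0 < α)
include hγ0 hγ1 hα


lemma c_pos : 0 < 4 * α * γ / (1 - γ) := by
  apply div_pos (by positivity) (by linarith)

lemma z1_pos : 0 < z₁ γ α := rpow_pos_of_pos (div_pos (by linarith) (by positivity)) _

lemma z1_eq : z₁ γ α = (4 * α * γ / (1 - γ)) ^ (-(1 / (1 + γ))) := by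
  rw [z₁, rpow_neg (c_pos hγ0 hγ1 hα).le, ← inv_rpow (c_pos hγ0 hγ1 hα).le, inv_div]

lemma k1_pos : 0 < k₁ γ α := rpow_pos_of_pos (c_pos hγ0 hγ1 hα) _

lemma k1_eq_z1 : k₁ γ α = z₁ γ α ^ (-γ) := by
  rw [z1_eq hγ0 hγ1 hα, ← rpow_mul (c_pos hγ0 hγ1 hα).le, k₁]
  congr 1
  field_simp

lemma z1_rpow_one_add : z₁ γ α ^ (1 + γ) = (1 - γ) / (4 * α * γ) := by
  rw [z1_eq hγ0 hγ1 hα, ← rpow_mul (c_pos hγ0 hγ1 hα).le]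
  have h1 : -(1 / (1 + γ)) * (1 + γ) = -1 := by field_simp
  rw [h1, rpow_neg_one, inv_div]

lemma kz1 : k₁ γ α * z₁ γ α = z₁ γ α ^ (1 - γ) := by
  have hz := z1_pos hγ0 hγ1 hα
  rw [k1_eq_z1 hγ0 hγ1 hα]
  nth_rewrite 2 [show z₁ γ α = z₁ γ α ^ (1:ℝ) by rw [rpow_one]]
  rw [← rpow_add hz]; ring_nf

lemma k1_sq : k₁ γ α ^ 2 / (4 * α) = z₁ γ α ^ (1 - γ) * γ / (1 - γ) := by
  have hz := z1_pos hγ0 hγ1 hα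
  have h1 : k₁ γ α ^ 2 = z₁ γ α ^ (1 - γ) * (4 * α * γ / (1 - γ)) := by
    rw [k1_eq_z1 hγ0 hγ1 hα, sq, ← rpow_add hz,
      show -γ + -γ = (1 - γ) + (-(1 + γ)) by ring, rpow_add hz,
      rpow_neg hz.le, z1_rpow_one_add hγ0 hγ1 hα, inv_div]
  have h2 : 4 * α * γ / (1 - γ) / (4 * α) = γ / (1 - γ) := by
    rw [div_div, div_eq_div_iff (mul_pos (by linarith : (0:ℝ) < 1 - γ) (by positivity : (0:ℝ) < 4*α)).ne' (by linarith : (0:ℝ) < 1 - γ).ne']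
    ring
  rw [h1, mul_div_assoc, h2]
  ring



lemma z2_neg : z₂ γ α < 0 :=
  div_neg_of_neg_of_pos (neg_neg_iff_pos.mpr (k1_pos hγ0 hγ1 hα)) (by positivity)

lemma z2_lt_z1 : z₂ γ α < z₁ γ α := (z2_neg hγ0 hγ1 hα).trans (z1_pos hγ0 hγ1 hα)

lemma L_cont : Lf γ α (z₁ γ α) = pf γ (z₁ γ α) := by
  have h1 : Lf γ α (z₁ γ α) = k₁ γ α * z₁ γ α + k₁ γ α ^ 2 / (4 * α) := by
    rw [Lf]; field_simp; ring
  have hne : (1:ℝ) - γ ≠ 0 := by intro h; linarith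
  rw [h1, kz1 hγ0 hγ1 hα, k1_sq hγ0 hγ1 hα, pf]
  field_simp; ring

lemma L_z2 : Lf γ α (z₂ γ α) = gf α (z₂ γ α) := by
  rw [Lf, gf, z₂]; field_simp; ring

lemma hasDerivAt_gf (y : ℝ) : HasDerivAt (gf α) (-(2 * α * y)) y := by
  have := (hasDerivAt_pow 2 y).const_mul (-α)
  refine this.congr_deriv (Eq.symm ?_)
  push_cast; ring

lemma hasDerivAt_Lf (y : ℝ) : HasDerivAt (Lf γ α) (k₁ γ α) y := by
  have := (((hasDerivAt_id y).add_const (k₁ γ α / (2 * α))).const_mul (k₁ γ α)).sub_const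
    (α * (k₁ γ α / (2 * α)) ^ 2)
  refine this.congr_deriv (Eq.symm ?_); ring

lemma hasDerivAt_pf {y : ℝ} (hy : 0 < y) : HasDerivAt (pf γ) (y ^ (-γ)) y := by
  have := (Real.hasDerivAt_rpow_const (x := y) (p := 1 - γ) (Or.inl hy.ne')).div_const (1 - γ)
  refine this.congr_deriv (Eq.symm ?_)
  rw [show (1 : ℝ) - γ - 1 = -γ by ring, mul_comm, mul_div_assoc,
    div_self (by intro h; linarith : (1:ℝ) - γ ≠ 0), mul_one]

lemma hasDerivAt_fc1 (x : ℝ) : HasDerivAt (fc1 γ α) (phi γ α x) x := by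
  have hz2z1 := z2_lt_z1 hγ0 hγ1 hα
  have hz1p := z1_pos hγ0 hγ1 hα
  have hz2n := z2_neg hγ0 hγ1 hα
  have hkz2 : k₁ γ α = -(2 * α * z₂ γ α) := by rw [z₂]; field_simp
  rcases lt_trichotomy x (z₂ γ α) with h1 | h1 | h1
  · have heq : fc1 γ α =ᶠ[nhds x] gf α := by
      filter_upwards [Iio_mem_nhds h1] with y hy
      rw [fc1_eq, if_pos (show y < z₂ γ α from hy)]
    rw [phi, if_pos h1]
    exact (hasDerivAt_gf hγ0 hγ1 hα x).congr_of_eventuallyEq heq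
  · -- x = z₂
    have hphi : phi γ α x = -(2 * α * x) := by
      rw [phi, if_neg (by rw [h1]; exact lt_irrefl _), if_pos (by rw [h1]; exact hz2z1.le), hkz2, h1]
    rw [hphi]
    have hval : fc1 γ α x = gf α x := by
      rw [fc1_eq, if_neg (by rw [h1]; exact lt_irrefl _), if_pos (by rw [h1]; exact hz2z1.le), h1]
      exact L_z2 hγ0 hγ1 hα
    have left : HasDerivWithinAt (fc1 γ α) (-(2 * α * x)) (Set.Iic x) x := by
      apply (hasDerivAt_gf hγ0 hγ1 hα x).hasDerivWithinAt.congr _ hval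
      intro y hy
      rcases lt_or_eq_of_le (Set.mem_Iic.mp hy) with h | h
      · rw [fc1_eq, if_pos (h.trans_eq h1)]
      · rw [h]; exact hval
    have right : HasDerivWithinAt (fc1 γ α) (-(2 * α * x)) (Set.Ici x) x := by
      have hL' : HasDerivWithinAt (Lf γ α) (-(2 * α * x)) (Set.Ici x) x := by
        rw [h1, ← hkz2]; exact (hasDerivAt_Lf hγ0 hγ1 hα (z₂ γ α)).hasDerivWithinAt
      apply hL'.congr_of_eventuallyEq _ (by rw [hval, h1, L_z2 hγ0 hγ1 hα])
      have hmem : Set.Iio (z₁ γ α) ∈ nhdsWithin x (Set.Ici x) :=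
        nhdsWithin_le_nhds (Iio_mem_nhds (h1 ▸ hz2z1))
      filter_upwards [hmem, self_mem_nhdsWithin] with y hy1 hy2
      rw [fc1_eq, if_neg (by rw [← h1] at hz2n ⊢; exact not_lt.mpr (Set.mem_Ici.mp hy2)), if_pos hy1.le]
    exact (left.union right).hasDerivAt (by simp [Set.Iic_union_Ici])
  · rcases lt_trichotomy x (z₁ γ α) with h2 | h2 | h2
    · have heq : fc1 γ α =ᶠ[nhds x] Lf γ α := by
        filter_upwards [Ioo_mem_nhds h1 h2] with y hy
        rw [fc1_eq, if_neg (not_lt.mpr hy.1.le), if_pos hy.2.le]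
      rw [phi, if_neg (not_lt.mpr h1.le), if_pos h2.le]
      exact (hasDerivAt_Lf hγ0 hγ1 hα x).congr_of_eventuallyEq heq
    · -- x = z₁
      have hphi : phi γ α x = k₁ γ α := by
        rw [phi, if_neg (not_lt.mpr h1.le), if_pos h2.le]
      rw [hphi]
      have hval : fc1 γ α x = Lf γ α x := by
        rw [fc1_eq, if_neg (not_lt.mpr h1.le), if_pos h2.le]
      have left : HasDerivWithinAt (fc1 γ α) (k₁ γ α) (Set.Iic x) x := by
        apply (hasDerivAt_Lf hγ0 hγ1 hα x).hasDerivWithinAt.congr_of_eventuallyEq _ hval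
        have hmem : Set.Ioi (z₂ γ α) ∈ nhdsWithin x (Set.Iic x) :=
          nhdsWithin_le_nhds (Ioi_mem_nhds h1)
        filter_upwards [hmem, self_mem_nhdsWithin] with y hy1 hy2
        rw [fc1_eq, if_neg (not_lt.mpr (le_of_lt hy1)), if_pos ((Set.mem_Iic.mp hy2).trans h2.le)]
      have right : HasDerivWithinAt (fc1 γ α) (k₁ γ α) (Set.Ici x) x := by
        have hp' : HasDerivWithinAt (pf γ) (k₁ γ α) (Set.Ici x) x := by
          rw [k1_eq_z1 hγ0 hγ1 hα, ← h2]
          exact (hasDerivAt_pf hγ0 hγ1 hα (h2 ▸ hz1p)).hasDerivWithinAt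
        apply hp'.congr _ (by rw [hval, h2, L_cont hγ0 hγ1 hα])
        intro y hy
        rcases lt_or_eq_of_le (Set.mem_Ici.mp hy) with h | h
        · rw [fc1_eq, if_neg (not_lt.mpr (h1.le.trans h.le)), if_neg (not_le.mpr (h2 ▸ h))]
        · rw [← h, hval, h2]; exact L_cont hγ0 hγ1 hα
      exact (left.union right).hasDerivAt (by simp [Set.Iic_union_Ici])
    · have heq : fc1 γ α =ᶠ[nhds x] pf γ := by
        filter_upwards [Ioi_mem_nhds h2] with y hy
        rw [fc1_eq, if_neg (not_lt.mpr (hz2z1.le.trans (le_of_lt hy))),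
          if_neg (not_le.mpr hy)]
      rw [phi, if_neg (not_lt.mpr h1.le), if_neg (not_le.mpr h2)]
      exact (hasDerivAt_pf hγ0 hγ1 hα (hz1p.trans h2)).congr_of_eventuallyEq heq


lemma rpow_neg_le_k1 {x : ℝ} (hx : z₁ γ α ≤ x) : x ^ (-γ) ≤ k₁ γ α := by
  have hz1 := z1_pos hγ0 hγ1 hα
  have hxp : 0 < x := hz1.trans_le hx
  rw [k1_eq_z1 hγ0 hγ1 hα, rpow_neg hz1.le, rpow_neg hxp.le]
  have h1 : z₁ γ α ^ γ ≤ x ^ γ := rpow_le_rpow hz1.le hx hγ0.le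
  exact inv_anti₀ (rpow_pos_of_pos hz1 γ) h1

lemma phi_anti : AntitoneOn (phi γ α) Set.univ := by
  have hz2z1 := z2_lt_z1 hγ0 hγ1 hα
  have hkz2 : k₁ γ α = -(2 * α * z₂ γ α) := by rw [z₂]; field_simp
  intro a _ b _ hab
  rw [phi, phi]
  rcases lt_or_ge a (z₂ γ α) with h1 | h1
  · rw [if_pos h1]
    rcases lt_or_ge b (z₂ γ α) with h2 | h2
    · rw [if_pos h2]; nlinarith
    · rw [if_neg (not_lt.mpr h2)]
      rcases le_or_gt b (z₁ γ α) with h3 | h3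
      · rw [if_pos h3]; nlinarith
      · rw [if_neg (not_le.mpr h3)]
        have := rpow_neg_le_k1 hγ0 hγ1 hα h3.le
        nlinarith
  · rw [if_neg (not_lt.mpr h1)]
    rcases le_or_gt a (z₁ γ α) with h2 | h2
    · rw [if_pos h2, if_neg (not_lt.mpr (h1.trans hab))]
      rcases le_or_gt b (z₁ γ α) with h3 | h3
      · rw [if_pos h3]
      · rw [if_neg (not_le.mpr h3)]
        exact rpow_neg_le_k1 hγ0 hγ1 hα h3.le
    · have hb1 : z₁ γ α < b := h2.trans_le hab
      rw [if_neg (not_le.mpr h2), if_neg (not_lt.mpr (h1.trans hab)),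
        if_neg (not_le.mpr hb1)]
      have hap : 0 < a := (z1_pos hγ0 hγ1 hα).trans h2
      rw [rpow_neg hap.le, rpow_neg (hap.trans_le hab).le]
      exact inv_anti₀ (rpow_pos_of_pos hap γ) (rpow_le_rpow hap.le hab hγ0.le)

lemma fc1_concave : ConcaveOn ℝ Set.univ (fc1 γ α) := by
  apply AntitoneOn.concaveOn_of_deriv convex_univ
  · exact fun x _ => (hasDerivAt_fc1 hγ0 hγ1 hα x).continuousAt.continuousWithinAt
  · rw [interior_univ]
    exact fun x _ => (hasDerivAt_fc1 hγ0 hγ1 hα x).differentiableAt.differentiableWithinAt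
  · rw [interior_univ]
    intro a ha b hb hab
    rw [(hasDerivAt_fc1 hγ0 hγ1 hα a).deriv, (hasDerivAt_fc1 hγ0 hγ1 hα b).deriv]
    exact phi_anti hγ0 hγ1 hα ha hb hab

lemma gf_le_Lf (x : ℝ) : gf α x ≤ Lf γ α x := by
  have hk := k1_pos hγ0 hγ1 hα
  have hkey : Lf γ α x - gf α x = (2 * α * x + k₁ γ α) ^ 2 / (4 * α) := by
    rw [Lf, gf]; field_simp; ring
  nlinarith [sq_nonneg (2 * α * x + k₁ γ α), div_nonneg (sq_nonneg (2 * α * x + k₁ γ α)) (by positivity : (0:ℝ) ≤ 4 * α)]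

lemma pf_le_Lf {x : ℝ} (hx : 0 ≤ x) : pf γ x ≤ Lf γ α x := by
  have hz1 := z1_pos hγ0 hγ1 hα
  have hne : (1:ℝ) - γ ≠ 0 := by intro h; linarith
  set t := x / z₁ γ α with ht
  have ht0 : 0 ≤ t := div_nonneg hx hz1.le
  have hbern : (1 + (t - 1)) ^ (1 - γ) ≤ 1 + (1 - γ) * (t - 1) :=
    rpow_one_add_le_one_add_mul_self (by linarith) (by linarith) (by linarith)
  rw [show 1 + (t - 1) = t by ring] at hbern
  have hxt : x = t * z₁ γ α := by rw [ht]; field_simp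
  have hxp : x ^ (1 - γ) = t ^ (1 - γ) * z₁ γ α ^ (1 - γ) := by
    rw [hxt, mul_rpow ht0 hz1.le]
  have hA : z₁ γ α ^ (1 - γ) = k₁ γ α * z₁ γ α := (kz1 hγ0 hγ1 hα).symm
  have hLx : Lf γ α x = k₁ γ α * x + k₁ γ α ^ 2 / (4 * α) := by
    rw [Lf]; field_simp; ring
  have hk2 : k₁ γ α ^ 2 / (4 * α) = (k₁ γ α * z₁ γ α) * γ / (1 - γ) := by
    rw [k1_sq hγ0 hγ1 hα, hA]
  have hC : (0:ℝ) ≤ k₁ γ α * z₁ γ α / (1 - γ) :=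
    div_nonneg (mul_nonneg (k1_pos hγ0 hγ1 hα).le hz1.le) (by linarith)
  calc pf γ x = t ^ (1 - γ) * (k₁ γ α * z₁ γ α / (1 - γ)) := by
        rw [pf, hxp, hA]; ring
    _ ≤ (1 + (1 - γ) * (t - 1)) * (k₁ γ α * z₁ γ α / (1 - γ)) :=
        mul_le_mul_of_nonneg_right hbern hC
    _ = Lf γ α x := by
        rw [hLx, hk2, hxt]; field_simp; ring

lemma f_le_fc1 (x : ℝ) : f γ α x ≤ fc1 γ α x := by
  have hz2n := z2_neg hγ0 hγ1 hα
  have hz1p := z1_pos hγ0 hγ1 hα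
  rw [f_eq, fc1_eq]
  rcases lt_or_ge x (z₂ γ α) with h1 | h1
  · rw [if_pos h1, if_pos (h1.trans hz2n)]
  · rw [if_neg (not_lt.mpr h1)]
    rcases le_or_gt x (z₁ γ α) with h2 | h2
    · rw [if_pos h2]
      rcases lt_or_ge x 0 with h3 | h3
      · rw [if_pos h3]; exact gf_le_Lf hγ0 hγ1 hα x
      · rw [if_neg (not_lt.mpr h3)]; exact pf_le_Lf hγ0 hγ1 hα h3
    · rw [if_neg (not_le.mpr h2), if_neg (not_lt.mpr (hz1p.trans h2).le)]

lemma fc1_eq_f {x : ℝ} (hx : x ≤ z₂ γ α ∨ z₁ γ α ≤ x) : fc1 γ α x = f γ α x := by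
  have hz2n := z2_neg hγ0 hγ1 hα
  have hz1p := z1_pos hγ0 hγ1 hα
  have hz2z1 := z2_lt_z1 hγ0 hγ1 hα
  rw [f_eq, fc1_eq]
  rcases hx with hx | hx
  · rcases lt_or_eq_of_le hx with h | h
    · rw [if_pos h, if_pos (h.trans hz2n)]
    · rw [h, if_neg (lt_irrefl _), if_pos hz2z1.le, if_pos hz2n]
      exact L_z2 hγ0 hγ1 hα
  · rcases lt_or_eq_of_le hx with h | h
    · rw [if_neg (not_lt.mpr (hz2z1.le.trans h.le)), if_neg (not_le.mpr h),
        if_neg (not_lt.mpr (hz1p.trans h).le)]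
    · rw [← h, if_neg (not_lt.mpr hz2z1.le), if_pos le_rfl, if_neg (not_lt.mpr hz1p.le)]
      exact L_cont hγ0 hγ1 hα

end

theorem stmt4 (γ α B : ℝ) (hγ0 : 0 < γ) (hγ1 : γ < 1) (hα : 0 < α) (hB : 0 < B)
    (hk : k₁ γ α < 2 * α * B) :
    ConcaveOn ℝ (Set.Ici (-B)) (fc1 γ α) ∧
    (∀ x ∈ Set.Ici (-B), f γ α x ≤ fc1 γ α x) ∧
    (∀ x ∈ Set.Icc (-B) (-(k₁ γ α) / (2 * α)) ∪ Set.Ici (z₁ γ α),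
      fc1 γ α x = f γ α x) ∧
    (∀ h : ℝ → ℝ, ConcaveOn ℝ (Set.Ici (-B)) h →
      (∀ x ∈ Set.Ici (-B), f γ α x ≤ h x) →
      ∀ x ∈ Set.Ici (-B), fc1 γ α x ≤ h x) := by
  have hz2B : -B ≤ z₂ γ α := by
    rw [z₂, le_div_iff₀ (by positivity : (0:ℝ) < 2 * α)]
    nlinarith
  have hz1p := z1_pos hγ0 hγ1 hα
  have hz2z1 := z2_lt_z1 hγ0 hγ1 hα
  have hz1B : z₁ γ α ∈ Set.Ici (-B) := by
    simp only [Set.mem_Ici]; linarith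
  refine ⟨(fc1_concave hγ0 hγ1 hα).subset (Set.subset_univ _) (convex_Ici _),
    fun x _ => f_le_fc1 hγ0 hγ1 hα x, ?_, ?_⟩
  · intro x hx
    rcases hx with hx | hx
    · exact fc1_eq_f hγ0 hγ1 hα (Or.inl hx.2)
    · exact fc1_eq_f hγ0 hγ1 hα (Or.inr hx)
  · intro h hconc hge x hx
    rcases le_or_gt x (z₂ γ α) with h1 | h1
    · rw [fc1_eq_f hγ0 hγ1 hα (Or.inl h1)]; exact hge x hx
    rcases le_or_gt (z₁ γ α) x with h2 | h2
    · rw [fc1_eq_f hγ0 hγ1 hα (Or.inr h2)]; exact hge x hx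
    have hd : 0 < z₁ γ α - z₂ γ α := by linarith
    set a := (z₁ γ α - x) / (z₁ γ α - z₂ γ α) with ha_def
    set b := (x - z₂ γ α) / (z₁ γ α - z₂ γ α) with hb_def
    have ha : 0 ≤ a := div_nonneg (by linarith) hd.le
    have hb : 0 ≤ b := div_nonneg (by linarith) hd.le
    have hab : a + b = 1 := by
      rw [ha_def, hb_def, ← add_div, div_eq_one_iff_eq hd.ne']; ring
    have hxc : a * z₂ γ α + b * z₁ γ α = x := by
      rw [ha_def, hb_def]; field_simp; ring
    have hcc := hconc.2 (show z₂ γ α ∈ Set.Ici (-B) from hz2B) hz1B ha hb hab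
    simp only [smul_eq_mul] at hcc
    rw [hxc] at hcc
    have hfc_z2 : fc1 γ α (z₂ γ α) = Lf γ α (z₂ γ α) := by
      rw [fc1_eq, if_neg (lt_irrefl _), if_pos hz2z1.le]
    have hfc_z1 : fc1 γ α (z₁ γ α) = Lf γ α (z₁ γ α) := by
      rw [fc1_eq, if_neg (not_lt.mpr hz2z1.le), if_pos le_rfl]
    have hfz2 : Lf γ α (z₂ γ α) = f γ α (z₂ γ α) := by
      rw [← hfc_z2]; exact fc1_eq_f hγ0 hγ1 hα (Or.inl le_rfl)
    have hfz1 : Lf γ α (z₁ γ α) = f γ α (z₁ γ α) := by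
      rw [← hfc_z1]; exact fc1_eq_f hγ0 hγ1 hα (Or.inr le_rfl)
    have hx_fc : fc1 γ α x = Lf γ α x := by
      rw [fc1_eq, if_neg (not_lt.mpr h1.le), if_pos h2.le]
    have haff : Lf γ α x = a * Lf γ α (z₂ γ α) + b * Lf γ α (z₁ γ α) := by
      rw [Lf, Lf, Lf, ← hxc]
      linear_combination (-(k₁ γ α * (k₁ γ α / (2 * α)) - α * (k₁ γ α / (2 * α)) ^ 2)) * hab
    calc fc1 γ α x = a * Lf γ α (z₂ γ α) + b * Lf γ α (z₁ γ α) := by rw [hx_fc, haff]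
      _ ≤ a * h (z₂ γ α) + b * h (z₁ γ α) := by
          apply add_le_add
          · exact mul_le_mul_of_nonneg_left (hfz2 ▸ hge _ hz2B) ha
          · exact mul_le_mul_of_nonneg_left (hfz1 ▸ hge _ hz1B) hb
      _ ≤ h x := hcc
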